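/- Let R be a ring, u and v idempotents of R, N a maximal R-submodule of Rv and N' a maximal R-submodule of Ru. Then Ru/N' ≅ Rv/N as left R-modules if and only if there exists a ∈ R with a = uav, a ∉ N, and N'a ⊆ N. Moreover, in that case N' = {y ∈ Ru : ya ∈ N}. -/
import Mathlib


/-- A left ideal of a (possibly non-unital) ring, given as a set. -/
def IsLeftIdeal {R : Type*} [NonUnitalRing R] (I : Set R) : Prop :=
  (0 : R) ∈ I ∧ (∀ x ∈ I, ∀ y ∈ I, x + y ∈ I) ∧ (∀ x ∈ I, -x ∈ I) ∧
    ∀ (r : R), ∀ x ∈ I, r * x ∈ I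

/-- A maximal left ideal of `R`. -/
def IsMaxLeftIdeal {R : Type*} [NonUnitalRing R] (M : Set R) : Prop :=
  IsLeftIdeal M ∧ M ≠ Set.univ ∧
    ∀ J : Set R, IsLeftIdeal J → M ⊆ J → J = M ∨ J = Set.univ

/-- `N` is a maximal `R`-submodule of the left ideal with underlying set `U`. -/
def IsMaxSub {R : Type*} [NonUnitalRing R] (N U : Set R) : Prop :=
  IsLeftIdeal N ∧ N ⊆ U ∧ N ≠ U ∧
    ∀ J : Set R, IsLeftIdeal J → N ⊆ J → J ⊆ U → J = N ∨ J = U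

/-- The set `Rv = {rv : r ∈ R}`. -/
def Rset {R : Type*} [NonUnitalRing R] (v : R) : Set R := {x : R | ∃ t : R, x = t * v}

/-- `QuotIso U N₁ V N₂` says that the quotient left `R`-modules `U/N₁` and `V/N₂`
are isomorphic: there is a map `f` carrying `U` into `V` which is additive and
`R`-linear modulo `N₂`, surjective onto `V` modulo `N₂`, and whose kernel on `U`
is exactly `N₁`. -/
def QuotIso {R : Type*} [NonUnitalRing R] (U N₁ V N₂ : Set R) : Prop :=
  ∃ f : R → R,
    (∀ x ∈ U, f x ∈ V) ∧
    (∀ x ∈ U, ∀ y ∈ U, f (x + y) - (f x + f y) ∈ N₂) ∧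
    (∀ (r : R), ∀ x ∈ U, f (r * x) - r * f x ∈ N₂) ∧
    (∀ y ∈ V, ∃ x ∈ U, f x - y ∈ N₂) ∧
    (∀ x ∈ U, (x ∈ N₁ ↔ f x ∈ N₂))

section aux
variable {R : Type*} [NonUnitalRing R]

lemma li_sub {I : Set R} (h : IsLeftIdeal I) {x y : R} (hx : x ∈ I) (hy : y ∈ I) :
    x - y ∈ I := by
  have := h.2.1 x hx (-y) (h.2.2.1 y hy)
  simpa [sub_eq_add_neg] using this

lemma rset_mul {v x : R} (hx : x ∈ Rset v) (r : R) : r * x ∈ Rset v := by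
  obtain ⟨t, rfl⟩ := hx; exact ⟨r * t, (mul_assoc r t v).symm⟩

lemma rset_self {u : R} (hu : u * u = u) : u ∈ Rset u := ⟨u, hu.symm⟩

lemma rset_zero (v : R) : (0 : R) ∈ Rset v := ⟨0, (zero_mul v).symm⟩

lemma rset_add {v x y : R} (hx : x ∈ Rset v) (hy : y ∈ Rset v) : x + y ∈ Rset v := by
  obtain ⟨s, rfl⟩ := hx; obtain ⟨t, rfl⟩ := hy; exact ⟨s + t, (add_mul s t v).symm⟩

lemma rset_neg {v x : R} (hx : x ∈ Rset v) : -x ∈ Rset v := by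
  obtain ⟨s, rfl⟩ := hx; exact ⟨-s, (neg_mul s v).symm⟩

lemma ua_eq {u v a : R} (hu : u * u = u) (ha : a = u * a * v) : u * a = a := by
  conv_lhs => rw [ha]
  rw [← mul_assoc, ← mul_assoc, hu, ← ha]

lemma kernel_eq {u v a : R} (hu : u * u = u)
    {N N' : Set R} (hNli : IsLeftIdeal N) (hN' : IsMaxSub N' (Rset u))
    (ha : a = u * a * v) (haN : a ∉ N) (hNa : ∀ y ∈ N', y * a ∈ N) :
    N' = {y : R | y ∈ Rset u ∧ y * a ∈ N} := by
  set K : Set R := {y : R | y ∈ Rset u ∧ y * a ∈ N} with hK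
  have hKli : IsLeftIdeal K := by
    refine ⟨⟨rset_zero u, by simpa using hNli.1⟩, ?_, ?_, ?_⟩
    · rintro x ⟨hx1, hx2⟩ y ⟨hy1, hy2⟩
      exact ⟨rset_add hx1 hy1, by rw [add_mul]; exact hNli.2.1 _ hx2 _ hy2⟩
    · rintro x ⟨hx1, hx2⟩
      exact ⟨rset_neg hx1, by rw [neg_mul]; exact hNli.2.2.1 _ hx2⟩
    · rintro r x ⟨hx1, hx2⟩
      exact ⟨rset_mul hx1 r, by rw [mul_assoc]; exact hNli.2.2.2 r _ hx2⟩
  have hsub : N' ⊆ K := fun y hy => ⟨hN'.2.1 hy, hNa y hy⟩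
  have hKu : K ⊆ Rset u := fun y hy => hy.1
  rcases hN'.2.2.2 K hKli hsub hKu with h | h
  · exact h.symm
  · exfalso
    have hm : u ∈ K := h ▸ rset_self hu
    exact haN (by rw [← ua_eq hu ha]; exact hm.2)

end aux

/-- Isomorphism criterion for simple modules `Ru/N'` and `Rv/N` (for idempotents
`u`, `v` and maximal submodules `N' ⊆ Ru`, `N ⊆ Rv`): they are isomorphic iff there
is `a = uav` with `a ∉ N` and `N'a ⊆ N`; and in that case
`N' = {y ∈ Ru : ya ∈ N}`. -/
theorem quotIso_iff_exists_element {R : Type*} [NonUnitalRing R]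
    (u v : R) (hu : u * u = u) (hv : v * v = v)
    (N N' : Set R) (hN : IsMaxSub N (Rset v)) (hN' : IsMaxSub N' (Rset u)) :
    (QuotIso (Rset u) N' (Rset v) N ↔
      ∃ a : R, a = u * a * v ∧ a ∉ N ∧ ∀ y ∈ N', y * a ∈ N) ∧
    (∀ a : R, a = u * a * v → a ∉ N → (∀ y ∈ N', y * a ∈ N) →
      N' = {y : R | y ∈ Rset u ∧ y * a ∈ N}) := by
  have hNli : IsLeftIdeal N := hN.1
  constructor
  · constructor
    · -- forward direction
      rintro ⟨f, hmap, hadd, hlin, hsurj, hker⟩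
      have humem : u ∈ Rset u := rset_self hu
      set a := u * f u with ha_def
      have hfu : f u ∈ Rset v := hmap u humem
      have hav : a * v = a := by
        obtain ⟨t, ht⟩ := hfu
        rw [ha_def, ht, mul_assoc, mul_assoc, hv]
      have hua : u * a = a := by rw [ha_def, ← mul_assoc, hu]
      have huav : a = u * a * v := by rw [hua, hav]
      -- f u ≡ a mod N
      have haf : f u - a ∈ N := by
        have h := hlin u u humem
        rwa [hu] at h
      -- key congruence : f y ≡ y * a mod N on Rset u
      have key : ∀ y ∈ Rset u, f y - y * a ∈ N := by
        rintro y ⟨s, rfl⟩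
        have h1 : f (s * u) - s * f u ∈ N := hlin s u humem
        have h2 : s * f u - s * u * a ∈ N := by
          have e : s * u * a = s * a := by rw [mul_assoc, hua]
          rw [e, ← mul_sub]
          exact hNli.2.2.2 s _ haf
        have h3 := hNli.2.1 _ h1 _ h2
        rwa [sub_add_sub_cancel] at h3
      have huN' : u ∉ N' := by
        intro h
        apply hN'.2.2.1
        refine Set.Subset.antisymm hN'.2.1 ?_
        rintro x ⟨s, rfl⟩
        exact hN'.1.2.2.2 s u h
      have hfuN : f u ∉ N := fun h => huN' ((hker u humem).2 h)
      have haN : a ∉ N := by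
        intro h
        apply hfuN
        have := hNli.2.1 _ haf _ h
        rwa [sub_add_cancel] at this
      refine ⟨a, huav, haN, fun y hy => ?_⟩
      have hyu := hN'.2.1 hy
      have h1 : f y ∈ N := (hker y hyu).1 hy
      have h2 := key y hyu
      have h3 := li_sub hNli h1 h2
      rwa [sub_sub_cancel] at h3
    · -- backward direction
      rintro ⟨a, ha, haN, hNa⟩
      have hua : u * a = a := ua_eq hu ha
      refine ⟨fun x => x * a, ?_, ?_, ?_, ?_, ?_⟩
      · intro x _
        refine ⟨x * (u * a), ?_⟩
        show x * a = x * (u * a) * v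
        conv_lhs => rw [ha, ← mul_assoc]
      · intro x _ y _
        show (x + y) * a - (x * a + y * a) ∈ N
        rw [add_mul, sub_self]; exact hNli.1
      · intro r x _
        show r * x * a - r * (x * a) ∈ N
        rw [mul_assoc, sub_self]; exact hNli.1
      · -- surjectivity via maximality of N
        set J : Set R := {z : R | z ∈ Rset v ∧ ∃ x ∈ Rset u, x * a - z ∈ N} with hJ
        have hJli : IsLeftIdeal J := by
          refine ⟨⟨rset_zero v, 0, rset_zero u, by simpa using hNli.1⟩, ?_, ?_, ?_⟩
          · rintro z₁ ⟨hz1, x1, hx1, h1⟩ z₂ ⟨hz2, x2, hx2, h2⟩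
            refine ⟨rset_add hz1 hz2, x1 + x2, rset_add hx1 hx2, ?_⟩
            rw [add_mul, add_sub_add_comm]
            exact hNli.2.1 _ h1 _ h2
          · rintro z ⟨hz, x, hx, h1⟩
            refine ⟨rset_neg hz, -x, rset_neg hx, ?_⟩
            rw [show -x * a - -z = -(x * a - z) by noncomm_ring]
            exact hNli.2.2.1 _ h1
          · rintro r z ⟨hz, x, hx, h1⟩
            refine ⟨rset_mul hz r, r * x, rset_mul hx r, ?_⟩
            rw [mul_assoc, ← mul_sub]
            exact hNli.2.2.2 r _ h1
        have hNJ : N ⊆ J := by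
          intro z hz
          exact ⟨hN.2.1 hz, 0, rset_zero u, by
            rw [zero_mul, zero_sub]; exact hNli.2.2.1 _ hz⟩
        have hJv : J ⊆ Rset v := fun z hz => hz.1
        have haJ : a ∈ J := ⟨⟨u * a, ha⟩, u, rset_self hu, by
          rw [hua, sub_self]; exact hNli.1⟩
        rcases hN.2.2.2 J hJli hNJ hJv with h | h
        · exact absurd (h ▸ haJ) haN
        · intro z hz
          have : z ∈ J := h ▸ hz
          obtain ⟨_, x, hx, hxz⟩ := this
          exact ⟨x, hx, hxz⟩
      · -- kernel
        intro x hx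
        constructor
        · exact fun h => hNa x h
        · intro h
          rw [kernel_eq hu hNli hN' ha haN hNa]
          exact ⟨hx, h⟩
  · intro a ha h1 h2
    exact kernel_eq hu hNli hN' ha h1 h2
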